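/- Let d = 2, ν > 0, n ≥ 1, V* ≥ 0, and let f_k : ℝ → ℂ² (0 < |k| ≤ n) be a continuous forcing with V(f(t)) = Σ_{0<|k|≤n}|k|²|f_k(t)|² ≤ ν² V* for all t. Let u be a real, divergence-free solution of the symmetric Galerkin projection of order n of the Navier–Stokes Fourier system with forcing f. Then for all t₀ and all t ≥ 0, ‖u(t₀+t)‖₁ ≤ (‖u(t₀)‖₁ − √V*) e^{−νt} + √V*, where ‖u‖₁ = √(Σ_{k}|k|²|u_k|²). -/

import Mathlib

noncomputable section

open scoped BigOperators

/-- Euclidean norm of an integer vector `k ∈ ℤ^d ⊂ ℝ^d`. -/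
def znorm {d : ℕ} (k : Fin d → ℤ) : ℝ := Real.sqrt (∑ i, ((k i : ℝ))^2)

/-- The bilinear pairing `(a·k) = Σ_j a_j k_j` of a complex vector with an integer vector. -/
def dotZ {d : ℕ} (a : EuclideanSpace ℂ (Fin d)) (k : Fin d → ℤ) : ℂ := ∑ j, a j * (k j : ℂ)

/-- Orthogonal projection `Π_k` onto the orthogonal complement of the (real) vector `k`. -/
def projP {d : ℕ} (k : Fin d → ℤ) (v : EuclideanSpace ℂ (Fin d)) : EuclideanSpace ℂ (Fin d) :=
  WithLp.toLp 2 (fun j => v j - (dotZ v k / ((∑ i, ((k i : ℝ))^2 : ℝ) : ℂ)) * (k j : ℂ))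

/-- The `k1`-th term of the Navier–Stokes nonlinearity
`N_k(u) = -i Σ_{k1 ≠ 0} (u_{k1}·k) Π_k u_{k-k1}`. -/
def Nterm {d : ℕ} (u : (Fin d → ℤ) → EuclideanSpace ℂ (Fin d)) (k k1 : Fin d → ℤ) :
    EuclideanSpace ℂ (Fin d) :=
  if k1 = 0 then 0 else (-Complex.I * dotZ (u k1) k) • projP k (u (k - k1))

/-- The Navier–Stokes nonlinearity `N_k(u)`. -/
def Nfun {d : ℕ} (u : (Fin d → ℤ) → EuclideanSpace ℂ (Fin d)) (k : Fin d → ℤ) :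
    EuclideanSpace ℂ (Fin d) := ∑' k1, Nterm u k k1

/-- Energy `E(u) = Σ_k |u_k|²`. -/
def energy {d : ℕ} (u : (Fin d → ℤ) → EuclideanSpace ℂ (Fin d)) : ℝ := ∑' k, ‖u k‖^2

/-- Enstrophy `V(u) = Σ_k |k|²|u_k|²`. -/
def enstrophy {d : ℕ} (u : (Fin d → ℤ) → EuclideanSpace ℂ (Fin d)) : ℝ :=
  ∑' k, (znorm k)^2 * ‖u k‖^2

/-- Divergence-free: `(u_k · k) = 0` for all `k`. -/
def divFree {d : ℕ} (u : (Fin d → ℤ) → EuclideanSpace ℂ (Fin d)) : Prop :=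
  ∀ k, dotZ (u k) k = 0

/-- Reality condition: `u_{-k} = conj (u_k)`. -/
def realSeq {d : ℕ} (u : (Fin d → ℤ) → EuclideanSpace ℂ (Fin d)) : Prop :=
  ∀ k j, u (-k) j = starRingEnd ℂ (u k j)

/-- RHS of the Galerkin-projected Navier–Stokes system in the Fourier domain.
(For `u` supported on modes `0 < |k| ≤ n`, the `tsum` below reduces to the finite sum
over `k1 ≠ 0`, `|k1| ≤ n`, `0 < |k-k1| ≤ n`.) -/
def GalerkinRHS {d : ℕ} (ν : ℝ) (fk : EuclideanSpace ℂ (Fin d))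
    (u : (Fin d → ℤ) → EuclideanSpace ℂ (Fin d)) (k : Fin d → ℤ) :
    EuclideanSpace ℂ (Fin d) :=
  (∑' k1, Nterm u k k1) - ((ν * (znorm k)^2 : ℝ) : ℂ) • u k + projP k fk

/-- `u : ℝ → (ℤ^d → ℂ^d)` is a solution of the symmetric Galerkin projection of order `n`
of the Navier–Stokes Fourier system with viscosity `ν` and forcing `f`. -/
def IsGalerkinSol {d : ℕ} (ν n : ℝ) (f : ℝ → (Fin d → ℤ) → EuclideanSpace ℂ (Fin d))
    (u : ℝ → (Fin d → ℤ) → EuclideanSpace ℂ (Fin d)) : Prop :=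
  (∀ t, u t 0 = 0) ∧
  (∀ t k, n < znorm k → u t k = 0) ∧
  (∀ t (k : Fin d → ℤ), k ≠ 0 → znorm k ≤ n →
    HasDerivAt (fun s => u s k) (GalerkinRHS ν (f t k) (u t) k) t)

/-!
Let `V(t)` be the enstrophy of `u(t)`; for the Galerkin system it is a finite sum, so it is
differentiable with `V' = 2 Σ |k|² Re ⟨u_k, du_k/dt⟩`. The pressure projection drops out against the
divergence-free `u_k`. In two dimensions the nonlinear term conserves enstrophy: in terms of the
scalar vorticity, the flux is a sum over triads `p + q + r = 0`, and the sum of a triad's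
contribution over the six permutations of `(p, q, r)` vanishes. Since `|k| ≥ 1` on nonzero modes,
viscosity gives `-2ν Σ|k|⁴|u_k|² ≤ -2νV`, and Cauchy–Schwarz bounds the forcing term by
`2ν √V* √V`. Hence `V' ≤ -2νV + 2ν√V* √V`, i.e. formally `(√V)' ≤ -ν(√V - √V*)`, which integrates
to the claim.
-/

open Finset ComplexConjugate

lemma tsum_eq_zero_of_sum_comp_perm_eq_zero {α M : Type*} [AddCommMonoid M] [TopologicalSpace M]
    [ContinuousAdd M] [T2Space M] [Module.IsTorsionFree ℕ M] {F : α → M} (hF : Summable F)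
    {m : ℕ} [NeZero m] (σ : Fin m → Equiv.Perm α) (h : ∀ x, ∑ i, F (σ i x) = 0) :
    ∑' x, F x = 0 := by
  have : m • ∑' x, F x = 0 :=
    calc m • ∑' x, F x = ∑ i, ∑' x, F (σ i x) := by simp [Equiv.tsum_eq]
      _ = ∑' x, ∑ i, F (σ i x) :=
        (Summable.tsum_finsetSum fun i _ => (σ i).summable_iff.mpr hF).symm
      _ = 0 := by simp [h]
  exact (smul_eq_zero.mp this).resolve_left (NeZero.ne m)

open Real in
lemma le_exp_decay_of_hasDerivAt_le {g g' : ℝ → ℝ} {ν b : ℝ}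
    (hg : ∀ s, HasDerivAt g (g' s) s) (hle : ∀ s, g' s ≤ -ν * g s + ν * b)
    (t₀ : ℝ) {t : ℝ} (ht : 0 ≤ t) :
    g (t₀ + t) ≤ (g t₀ - b) * exp (-ν * t) + b := by
  have hanti : Antitone fun s => (g s - b) * exp (ν * s) := by
    refine antitone_of_hasDerivAt_nonpos (f' := fun s => (g' s + ν * (g s - b)) * exp (ν * s))
      (fun s => ?_) fun s => mul_nonpos_of_nonpos_of_nonneg (by linarith [hle s]) (exp_pos _).le
    exact (((hg s).sub_const b).fun_mul ((hasDerivAt_id s).const_mul ν).exp).congr_deriv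
      (by simp only [id]; ring)
  have key : (g (t₀ + t) - b) * exp (ν * t) * exp (ν * t₀) ≤ (g t₀ - b) * exp (ν * t₀) := by
    have := hanti (le_add_of_nonneg_right ht : t₀ ≤ t₀ + t)
    dsimp only at this
    rwa [mul_add, exp_add, mul_comm (exp (ν * t₀)), ← mul_assoc] at this
  have hinv : exp (ν * t) * exp (-ν * t) = 1 := by rw [← exp_add]; simp
  calc g (t₀ + t) = (g (t₀ + t) - b) * exp (ν * t) * exp (-ν * t) + b := by
        rw [mul_assoc, hinv]; ring
    _ ≤ (g t₀ - b) * exp (-ν * t) + b := by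
        gcongr
        exact le_of_mul_le_mul_right key (exp_pos _)

open Real in
lemma sqrt_le_of_hasDerivAt_le {V V' : ℝ → ℝ} {ν c : ℝ} (hν : 0 ≤ ν) (hc : 0 ≤ c)
    (hV : ∀ s, HasDerivAt V (V' s) s) (hV0 : ∀ s, 0 ≤ V s)
    (hle : ∀ s, V' s ≤ -(2 * ν) * V s + 2 * ν * c * √(V s))
    (t₀ : ℝ) {t : ℝ} (ht : 0 ≤ t) :
    √(V (t₀ + t)) ≤ (√(V t₀) - c) * exp (-ν * t) + c := by
  refine le_of_forall_pos_le_add fun η hη => ?_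
  -- regularize `√V`, which need not be differentiable where `V` vanishes
  set g : ℝ → ℝ := fun s => √(V s + η ^ 2)
  have hpos : ∀ s, 0 < V s + η ^ 2 := fun s => by nlinarith [hV0 s]
  have hg : ∀ s, HasDerivAt g (V' s / (2 * g s)) s := fun s =>
    ((hV s).add_const (η ^ 2)).sqrt (hpos s).ne'
  have hgη : ∀ s, η ≤ g s := fun s =>
    (sqrt_sq hη.le).symm.le.trans (sqrt_le_sqrt (by linarith [hV0 s]))
  have hgV : ∀ s, √(V s) ≤ g s := fun s => sqrt_le_sqrt (by nlinarith)
  have hg' : ∀ s, V' s / (2 * g s) ≤ -ν * g s + ν * (c + η) := by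
    intro s
    have hgs : g s ^ 2 = V s + η ^ 2 := sq_sqrt (hpos s).le
    rw [div_le_iff₀ (by linarith [hgη s])]
    nlinarith [hle s, mul_nonneg (mul_nonneg hν hc) (sub_nonneg.mpr (hgV s)),
      mul_nonneg (mul_nonneg hν hη.le) (sub_nonneg.mpr (hgη s))]
  have hg₀ : g t₀ ≤ √(V t₀) + η :=
    sqrt_le_iff.mpr ⟨by positivity, by nlinarith [sq_sqrt (hV0 t₀), sqrt_nonneg (V t₀)]⟩
  calc √(V (t₀ + t)) ≤ g (t₀ + t) := hgV _
    _ ≤ (g t₀ - (c + η)) * exp (-ν * t) + (c + η) := le_exp_decay_of_hasDerivAt_le hg hg' t₀ ht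
    _ ≤ (√(V t₀) - c) * exp (-ν * t) + c + η := by nlinarith [exp_pos (-ν * t)]

section General

variable {d : ℕ}

@[simp]
lemma znorm_zero : znorm (0 : Fin d → ℤ) = 0 := by simp [znorm]

lemma znorm_sq (k : Fin d → ℤ) : znorm k ^ 2 = ∑ i, ((k i : ℝ)) ^ 2 :=
  Real.sq_sqrt (by positivity)

lemma abs_le_znorm (k : Fin d → ℤ) (i : Fin d) : |(k i : ℝ)| ≤ znorm k :=
  Real.abs_le_sqrt (single_le_sum (fun j _ => sq_nonneg ((k j : ℝ))) (mem_univ i))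

lemma one_le_znorm_sq {k : Fin d → ℤ} (hk : k ≠ 0) : 1 ≤ znorm k ^ 2 := by
  obtain ⟨i, hi⟩ := Function.ne_iff.mp hk
  have hki : (1 : ℝ) ≤ (k i : ℝ) ^ 2 := by
    have : (1 : ℤ) ≤ k i ^ 2 := by nlinarith [Int.one_le_abs hi, sq_abs (k i)]
    exact_mod_cast this
  rw [znorm_sq]
  exact hki.trans (single_le_sum (fun j _ => sq_nonneg ((k j : ℝ))) (mem_univ i))

open scoped Classical in
def galerkinModes (d : ℕ) (n : ℝ) : Finset (Fin d → ℤ) :=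
  (Fintype.piFinset fun _ => Icc (-⌈n⌉) ⌈n⌉).filter fun k => k ≠ 0 ∧ znorm k ≤ n

lemma mem_galerkinModes {n : ℝ} {k : Fin d → ℤ} :
    k ∈ galerkinModes d n ↔ k ≠ 0 ∧ znorm k ≤ n := by
  refine ⟨fun hk => (mem_filter.mp hk).2, fun hk => mem_filter.mpr ⟨?_, hk⟩⟩
  refine Fintype.mem_piFinset.mpr fun i => mem_Icc.mpr ?_
  have hki := abs_le (a := (k i : ℝ)) |>.mp ((abs_le_znorm k i).trans (hk.2.trans (Int.le_ceil n)))
  exact ⟨by exact_mod_cast hki.1, by exact_mod_cast hki.2⟩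

lemma eq_zero_of_notMem_galerkinModes {n : ℝ} {w : (Fin d → ℤ) → EuclideanSpace ℂ (Fin d)}
    (h0 : w 0 = 0) (hw : ∀ k, n < znorm k → w k = 0) {k : Fin d → ℤ}
    (hk : k ∉ galerkinModes d n) : w k = 0 := by
  by_cases hk0 : k = 0
  · rw [hk0, h0]
  · exact hw k (not_le.mp fun h => hk (mem_galerkinModes.mpr ⟨hk0, h⟩))

lemma enstrophy_eq_sum_galerkinModes {n : ℝ} {w : (Fin d → ℤ) → EuclideanSpace ℂ (Fin d)}
    (hw : ∀ k, n < znorm k → w k = 0) :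
    enstrophy w = ∑ k ∈ galerkinModes d n, znorm k ^ 2 * ‖w k‖ ^ 2 := by
  refine tsum_eq_sum fun k hk => ?_
  by_cases h0 : k = 0
  · simp [h0]
  · simp [hw k (not_le.mp fun h => hk (mem_galerkinModes.mpr ⟨h0, h⟩))]

lemma enstrophy_nonneg (w : (Fin d → ℤ) → EuclideanSpace ℂ (Fin d)) : 0 ≤ enstrophy w :=
  tsum_nonneg fun _ => by positivity

lemma inner_projP_of_dotZ_eq_zero {k : Fin d → ℤ} {a : EuclideanSpace ℂ (Fin d)}
    (ha : dotZ a k = 0) (v : EuclideanSpace ℂ (Fin d)) :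
    inner ℂ a (projP k v) = inner ℂ a v := by
  have hconj : ∑ j, conj (a j) * (k j : ℂ) = 0 := by
    simpa [dotZ] using congrArg conj ha
  simp only [projP, PiLp.inner_apply, RCLike.inner_apply, sub_mul, sum_sub_distrib,
    sub_eq_self]
  calc ∑ j, dotZ v k / ((∑ i, ((k i : ℝ)) ^ 2 : ℝ) : ℂ) * (k j : ℂ) * conj (a j)
      = dotZ v k / ((∑ i, ((k i : ℝ)) ^ 2 : ℝ) : ℂ) * ∑ j, conj (a j) * (k j : ℂ) := by
        rw [mul_sum]; exact sum_congr rfl fun j _ => by ring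
    _ = 0 := by rw [hconj, mul_zero]

lemma sum_znorm_sq_mul_real_inner_le (s : Finset (Fin d → ℤ))
    (w g : (Fin d → ℤ) → EuclideanSpace ℂ (Fin d)) :
    ∑ k ∈ s, znorm k ^ 2 * inner ℝ (w k) (g k)
      ≤ √(∑ k ∈ s, znorm k ^ 2 * ‖w k‖ ^ 2) * √(∑ k ∈ s, znorm k ^ 2 * ‖g k‖ ^ 2) := by
  calc ∑ k ∈ s, znorm k ^ 2 * inner ℝ (w k) (g k)
      ≤ ∑ k ∈ s, (znorm k * ‖w k‖) * (znorm k * ‖g k‖) :=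
        sum_le_sum fun k _ => by
          nlinarith [real_inner_le_norm (w k) (g k), sq_nonneg (znorm k)]
    _ ≤ √(∑ k ∈ s, (znorm k * ‖w k‖) ^ 2) * √(∑ k ∈ s, (znorm k * ‖g k‖) ^ 2) :=
        Real.sum_mul_le_sqrt_mul_sqrt s _ _
    _ = _ := by simp only [mul_pow]

lemma sum_znorm_sq_mul_le_sum_znorm_pow_four_mul {s : Finset (Fin d → ℤ)}
    (hs : (0 : Fin d → ℤ) ∉ s) (w : (Fin d → ℤ) → EuclideanSpace ℂ (Fin d)) :
    ∑ k ∈ s, znorm k ^ 2 * ‖w k‖ ^ 2 ≤ ∑ k ∈ s, znorm k ^ 2 * (znorm k ^ 2 * ‖w k‖ ^ 2) :=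
  sum_le_sum fun k hk => le_mul_of_one_le_left (by positivity)
    (one_le_znorm_sq fun h => hs (h ▸ hk))

end General

section Galerkin

variable {d : ℕ}

lemma EuclideanSpace.real_inner_eq_re_inner {ι : Type*} [Fintype ι] (x y : EuclideanSpace ℂ ι) :
    inner ℝ x y = (inner ℂ x y).re := by
  simp [PiLp.inner_apply, Complex.re_sum]

lemma real_inner_projP_of_dotZ_eq_zero {k : Fin d → ℤ} {a : EuclideanSpace ℂ (Fin d)}
    (ha : dotZ a k = 0) (v : EuclideanSpace ℂ (Fin d)) :
    inner ℝ a (projP k v) = inner ℝ a v := by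
  simp only [EuclideanSpace.real_inner_eq_re_inner, inner_projP_of_dotZ_eq_zero ha]

lemma real_inner_galerkinRHS {ν : ℝ} {fk : EuclideanSpace ℂ (Fin d)}
    {w : (Fin d → ℤ) → EuclideanSpace ℂ (Fin d)} {k : Fin d → ℤ} (hk : dotZ (w k) k = 0) :
    inner ℝ (w k) (GalerkinRHS ν fk w k)
      = inner ℝ (w k) (∑' k1, Nterm w k k1) - ν * znorm k ^ 2 * ‖w k‖ ^ 2 + inner ℝ (w k) fk := by
  rw [GalerkinRHS, inner_add_right, inner_sub_right, Complex.coe_smul, real_inner_smul_right,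
    real_inner_self_eq_norm_sq, real_inner_projP_of_dotZ_eq_zero hk]

variable {ν n : ℝ} {f u : ℝ → (Fin d → ℤ) → EuclideanSpace ℂ (Fin d)}

lemma IsGalerkinSol.hasDerivAt_enstrophy (hu : IsGalerkinSol ν n f u) (t : ℝ) :
    HasDerivAt (fun s => enstrophy (u s))
      (∑ k ∈ galerkinModes d n,
        znorm k ^ 2 * (2 * inner ℝ (u t k) (GalerkinRHS ν (f t k) (u t) k))) t := by
  simp_rw [enstrophy_eq_sum_galerkinModes (hu.2.1 _)]
  refine HasDerivAt.fun_sum fun k hk => ?_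
  obtain ⟨hk0, hkn⟩ := mem_galerkinModes.mp hk
  exact ((hu.2.2 t k hk0 hkn).norm_sq).const_mul _

end Galerkin

section TwoDim

/-- `zcross k (u k)` is the vorticity coefficient `ω_k` up to a factor `i`. -/
def zcross (k : Fin 2 → ℤ) : EuclideanSpace ℂ (Fin 2) →L[ℂ] ℂ :=
  (k 0 : ℂ) • EuclideanSpace.proj 1 - (k 1 : ℂ) • EuclideanSpace.proj 0

@[simp]
lemma zcross_apply (k : Fin 2 → ℤ) (v : EuclideanSpace ℂ (Fin 2)) :
    zcross k v = k 0 * v 1 - k 1 * v 0 := by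
  simp [zcross]

lemma dotZ_two (a : EuclideanSpace ℂ (Fin 2)) (k : Fin 2 → ℤ) :
    dotZ a k = a 0 * k 0 + a 1 * k 1 := by
  simp [dotZ, Fin.sum_univ_two]

lemma zcross_projP (k : Fin 2 → ℤ) (v : EuclideanSpace ℂ (Fin 2)) :
    zcross k (projP k v) = zcross k v := by
  simp only [zcross_apply, projP]
  ring

lemma conj_zcross_neg {w : (Fin 2 → ℤ) → EuclideanSpace ℂ (Fin 2)} (hw : realSeq w)
    (k : Fin 2 → ℤ) : conj (zcross (-k) (w (-k))) = -zcross k (w k) := by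
  simp [hw k]
  ring

lemma znorm_sq_mul_real_inner {k : Fin 2 → ℤ} {a : EuclideanSpace ℂ (Fin 2)}
    (ha : dotZ a k = 0) (v : EuclideanSpace ℂ (Fin 2)) :
    znorm k ^ 2 * inner ℝ a v = (conj (zcross k a) * zcross k v).re := by
  have hconj : conj (a 0) * k 0 + conj (a 1) * k 1 = 0 := by
    simpa [dotZ_two] using congrArg conj ha
  have : ((znorm k ^ 2 : ℝ) : ℂ) * inner ℂ a v = conj (zcross k a) * zcross k v := by
    simp only [znorm_sq, PiLp.inner_apply, RCLike.inner_apply, Fin.sum_univ_two, zcross_apply,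
      map_sub, map_mul, map_intCast]
    push_cast
    linear_combination (k 0 * v 0 + k 1 * v 1) * hconj
  rw [EuclideanSpace.real_inner_eq_re_inner, ← this, Complex.re_ofReal_mul]

lemma exists_eq_perp_of_divFree {w : (Fin 2 → ℤ) → EuclideanSpace ℂ (Fin 2)} (h0 : w 0 = 0)
    (hw : divFree w) (k : Fin 2 → ℤ) : ∃ l : ℂ, w k 0 = -l * k 1 ∧ w k 1 = l * k 0 := by
  have hk := hw k
  rw [dotZ_two] at hk
  by_cases h1 : k 1 = 0
  · by_cases h0' : k 0 = 0
    · have hk0 : k = 0 := funext fun j => by fin_cases j <;> simpa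
      exact ⟨0, by simp [hk0, h0]⟩
    · have h0'' : (k 0 : ℂ) ≠ 0 := by exact_mod_cast h0'
      refine ⟨w k 1 / k 0, ?_, by field_simp⟩
      simp only [h1, Int.cast_zero, mul_zero, add_zero, mul_eq_zero, h0'', or_false] at hk ⊢
      exact hk
  · have h1' : (k 1 : ℂ) ≠ 0 := by exact_mod_cast h1
    refine ⟨-w k 0 / k 1, by field_simp, ?_⟩
    field_simp
    linear_combination hk

/-- The contribution of the triad `(p, q, -(p + q))` to the vorticity form of the nonlinear
enstrophy flux. -/
def triadFlux (w : (Fin 2 → ℤ) → EuclideanSpace ℂ (Fin 2)) (x : (Fin 2 → ℤ) × (Fin 2 → ℤ)) : ℂ :=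
  conj (zcross (x.1 + x.2) (w (x.1 + x.2))) * (-Complex.I * dotZ (w x.1) (x.1 + x.2))
    * zcross (x.1 + x.2) (w x.2)

lemma triadFlux_sum_perm_eq_zero {w : (Fin 2 → ℤ) → EuclideanSpace ℂ (Fin 2)} (h0 : w 0 = 0)
    (hreal : realSeq w) (hdiv : divFree w) {a b c : Fin 2 → ℤ} (habc : a + b + c = 0) :
    triadFlux w (a, b) + triadFlux w (b, a) + triadFlux w (a, c) + triadFlux w (c, a)
      + triadFlux w (b, c) + triadFlux w (c, b) = 0 := by
  have hab : a + b = -c := eq_neg_of_add_eq_zero_left habc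
  have hba : b + a = -c := by rw [add_comm, hab]
  have hac : a + c = -b := eq_neg_of_add_eq_zero_left (by rw [← habc]; abel)
  have hca : c + a = -b := by rw [add_comm, hac]
  have hbc : b + c = -a := eq_neg_of_add_eq_zero_left (by rw [← habc]; abel)
  have hcb : c + b = -a := by rw [add_comm, hbc]
  simp only [triadFlux, hab, hba, hac, hca, hbc, hcb]
  rw [conj_zcross_neg hreal c, conj_zcross_neg hreal b, conj_zcross_neg hreal a]
  simp only [zcross_apply, dotZ_two]
  obtain ⟨la, ha0, ha1⟩ := exists_eq_perp_of_divFree h0 hdiv a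
  obtain ⟨lb, hb0, hb1⟩ := exists_eq_perp_of_divFree h0 hdiv b
  obtain ⟨lc, hc0, hc1⟩ := exists_eq_perp_of_divFree h0 hdiv c
  rw [ha0, ha1, hb0, hb1, hc0, hc1]
  obtain rfl : c = -(a + b) := eq_neg_of_add_eq_zero_right habc
  simp only [Pi.neg_apply, Pi.add_apply, Int.cast_neg, Int.cast_add]
  ring

lemma tsum_triadFlux_eq_zero {w : (Fin 2 → ℤ) → EuclideanSpace ℂ (Fin 2)}
    {S : Finset (Fin 2 → ℤ)} (hS : ∀ k ∉ S, w k = 0) (h0 : w 0 = 0) (hreal : realSeq w)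
    (hdiv : divFree w) : ∑' x, triadFlux w x = 0 := by
  have hsum : Summable (triadFlux w) := by
    refine summable_of_ne_finset_zero (s := S ×ˢ S) fun x hx => ?_
    rcases not_and_or.mp (mem_product.not.mp hx) with h | h
    · simp [triadFlux, hS _ h, dotZ]
    · simp [triadFlux, hS _ h]
  -- the six permutations of the triad `(p, q, -(p + q))`
  let σ : Equiv.Perm ((Fin 2 → ℤ) × (Fin 2 → ℤ)) := Equiv.prodComm _ _
  let τ : Equiv.Perm ((Fin 2 → ℤ) × (Fin 2 → ℤ)) :=
    Function.Involutive.toPerm (fun x => (x.1, -(x.1 + x.2))) fun x => by simp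
  refine tsum_eq_zero_of_sum_comp_perm_eq_zero hsum ![1, σ, τ, σ * τ, τ * σ, σ * τ * σ]
    fun x => ?_
  have := triadFlux_sum_perm_eq_zero h0 hreal hdiv (a := x.1) (b := x.2) (c := -(x.1 + x.2))
    (by abel)
  simpa only [Fin.sum_univ_six, Matrix.cons_val, Equiv.Perm.one_apply, Equiv.Perm.mul_apply, σ, τ,
    Function.Involutive.toPerm, Equiv.coe_fn_mk, Equiv.prodComm_apply, Prod.swap, Prod.mk.eta,
    add_comm x.2 x.1] using this

lemma conj_zcross_mul_zcross_nterm {w : (Fin 2 → ℤ) → EuclideanSpace ℂ (Fin 2)} (h0 : w 0 = 0)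
    (k k1 : Fin 2 → ℤ) :
    conj (zcross k (w k)) * zcross k (Nterm w k k1) = triadFlux w (k1, k - k1) := by
  by_cases hk1 : k1 = 0
  · simp [Nterm, triadFlux, hk1, h0, dotZ]
  · simp only [Nterm, if_neg hk1, map_smul, zcross_projP, triadFlux, add_sub_cancel, smul_eq_mul]
    ring

lemma sum_znorm_sq_mul_real_inner_nonlinear_eq_zero
    {w : (Fin 2 → ℤ) → EuclideanSpace ℂ (Fin 2)} {S : Finset (Fin 2 → ℤ)}
    (hS : ∀ k ∉ S, w k = 0) (h0 : w 0 = 0) (hreal : realSeq w) (hdiv : divFree w) :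
    ∑ k ∈ S, znorm k ^ 2 * inner ℝ (w k) (∑' k1, Nterm w k k1) = 0 := by
  have hN : ∀ k, ∑' k1, Nterm w k k1 = ∑ k1 ∈ S, Nterm w k k1 := fun k =>
    tsum_eq_sum fun k1 hk1 => by simp [Nterm, hS k1 hk1, dotZ]
  let e : ((Fin 2 → ℤ) × (Fin 2 → ℤ)) ≃ ((Fin 2 → ℤ) × (Fin 2 → ℤ)) :=
    { toFun := fun y => (y.2, y.1 - y.2)
      invFun := fun x => (x.1 + x.2, x.1)
      left_inv := fun y => by simp
      right_inv := fun x => by simp }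
  have hreindex : ∑' x, triadFlux w x = ∑ y ∈ S ×ˢ S, triadFlux w (y.2, y.1 - y.2) := by
    rw [← e.tsum_eq]
    refine tsum_eq_sum fun y hy => ?_
    rcases not_and_or.mp (mem_product.not.mp hy) with h | h
    · simp [e, triadFlux, hS _ h]
    · simp [e, triadFlux, hS _ h, dotZ]
  calc ∑ k ∈ S, znorm k ^ 2 * inner ℝ (w k) (∑' k1, Nterm w k k1)
      = (∑ k ∈ S, ∑ k1 ∈ S, triadFlux w (k1, k - k1)).re := by
        simp only [znorm_sq_mul_real_inner (hdiv _), hN, map_sum, mul_sum,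
          conj_zcross_mul_zcross_nterm h0, Complex.re_sum]
    _ = (∑' x, triadFlux w x).re := by rw [hreindex, sum_product]
    _ = 0 := by rw [tsum_triadFlux_eq_zero hS h0 hreal hdiv, Complex.zero_re]

lemma sum_znorm_sq_mul_real_inner_galerkinRHS_le {ν n Vstar : ℝ}
    {g w : (Fin 2 → ℤ) → EuclideanSpace ℂ (Fin 2)} (hν : 0 ≤ ν)
    (hg : ∀ k, n < znorm k → g k = 0) (hVg : enstrophy g ≤ ν ^ 2 * Vstar)
    (hw : ∀ k, n < znorm k → w k = 0) (h0 : w 0 = 0) (hreal : realSeq w) (hdiv : divFree w) :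
    ∑ k ∈ galerkinModes 2 n, znorm k ^ 2 * (2 * inner ℝ (w k) (GalerkinRHS ν (g k) w k))
      ≤ -(2 * ν) * enstrophy w + 2 * ν * √Vstar * √(enstrophy w) := by
  set S := galerkinModes 2 n
  have hsplit : ∑ k ∈ S, znorm k ^ 2 * (2 * inner ℝ (w k) (GalerkinRHS ν (g k) w k))
      = 2 * ∑ k ∈ S, znorm k ^ 2 * inner ℝ (w k) (∑' k1, Nterm w k k1)
        - 2 * ν * ∑ k ∈ S, znorm k ^ 2 * (znorm k ^ 2 * ‖w k‖ ^ 2)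
        + 2 * ∑ k ∈ S, znorm k ^ 2 * inner ℝ (w k) (g k) := by
    simp only [real_inner_galerkinRHS (hdiv _), mul_sum, ← sum_sub_distrib, ← sum_add_distrib]
    exact sum_congr rfl fun k _ => by ring
  have hflux := sum_znorm_sq_mul_real_inner_nonlinear_eq_zero (S := S)
    (fun _ hk => eq_zero_of_notMem_galerkinModes h0 hw hk) h0 hreal hdiv
  have hdiss := sum_znorm_sq_mul_le_sum_znorm_pow_four_mul (s := S)
    (fun h => (mem_galerkinModes.mp h).1 rfl) w
  have hforce : √(∑ k ∈ S, znorm k ^ 2 * ‖g k‖ ^ 2) ≤ ν * √Vstar := by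
    rw [← enstrophy_eq_sum_galerkinModes hg, ← Real.sqrt_sq hν, ← Real.sqrt_mul (sq_nonneg ν)]
    exact Real.sqrt_le_sqrt hVg
  have hcs := sum_znorm_sq_mul_real_inner_le S w g
  rw [hsplit, hflux, enstrophy_eq_sum_galerkinModes hw]
  nlinarith [mul_le_mul_of_nonneg_left hdiss hν,
    mul_le_mul_of_nonneg_left hforce (Real.sqrt_nonneg (∑ k ∈ S, znorm k ^ 2 * ‖w k‖ ^ 2))]

end TwoDim

theorem enstrophy_norm_decay_2d_general (ν : ℝ) (hν : 0 < ν) (n : ℝ)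
    (Vstar : ℝ)
    (f : ℝ → (Fin 2 → ℤ) → EuclideanSpace ℂ (Fin 2))
    (hfsupp : ∀ t k, n < znorm k → f t k = 0)
    (hVf : ∀ t, enstrophy (f t) ≤ ν^2 * Vstar)
    (u : ℝ → (Fin 2 → ℤ) → EuclideanSpace ℂ (Fin 2))
    (hu : IsGalerkinSol ν n f u)
    (hreal : ∀ t, realSeq (u t)) (hdiv : ∀ t, divFree (u t)) :
    ∀ t₀ t : ℝ, 0 ≤ t →
      Real.sqrt (enstrophy (u (t₀ + t)))
        ≤ (Real.sqrt (enstrophy (u t₀)) - Real.sqrt Vstar) * Real.exp (-ν * t)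
          + Real.sqrt Vstar := by
  intro t₀ t ht
  exact sqrt_le_of_hasDerivAt_le hν.le (Real.sqrt_nonneg Vstar) hu.hasDerivAt_enstrophy
    (fun _ => enstrophy_nonneg _)
    (fun s => sum_znorm_sq_mul_real_inner_galerkinRHS_le hν.le (hfsupp s) (hVf s) (hu.2.1 s)
      (hu.1 s) (hreal s) (hdiv s))
    t₀ ht

/-- 2D enstrophy decay: if `V(f(t)) ≤ ν² V*` for all `t`, then along any real
divergence-free solution of a symmetric Galerkin projection,
`‖u(t₀+t)‖₁ ≤ (‖u(t₀)‖₁ - √V*) e^{-νt} + √V*` for all `t ≥ 0`. -/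
theorem enstrophy_norm_decay_2d (ν : ℝ) (hν : 0 < ν) (n : ℝ) (hn : 1 ≤ n)
    (Vstar : ℝ) (hVstar : 0 ≤ Vstar)
    (f : ℝ → (Fin 2 → ℤ) → EuclideanSpace ℂ (Fin 2))
    (hf0 : ∀ t, f t 0 = 0) (hfsupp : ∀ t k, n < znorm k → f t k = 0)
    (hfc : ∀ k, Continuous fun t => f t k)
    (hVf : ∀ t, enstrophy (f t) ≤ ν^2 * Vstar)
    (u : ℝ → (Fin 2 → ℤ) → EuclideanSpace ℂ (Fin 2))
    (hu : IsGalerkinSol ν n f u)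
    (hreal : ∀ t, realSeq (u t)) (hdiv : ∀ t, divFree (u t)) :
    ∀ t₀ t : ℝ, 0 ≤ t →
      Real.sqrt (enstrophy (u (t₀ + t)))
        ≤ (Real.sqrt (enstrophy (u t₀)) - Real.sqrt Vstar) * Real.exp (-ν * t)
          + Real.sqrt Vstar :=
  enstrophy_norm_decay_2d_general ν hν n Vstar f hfsupp hVf u hu hreal hdiv
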